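/- Let K := ℂ(x) be the field of rational functions over ℂ. Let ι be a finite type and (f i) a family of nonzero polynomials in ℂ[x] having no common root in ℂ. For a nonzero polynomial f, write ℂ[x][1/f] for the subring of K generated by the polynomials together with 1/f. Suppose G assigns to each pair (i, j) an invertible 2×2 matrix over K such that all entries of G i j and of (G i j)⁻¹ lie in ℂ[x][1/(f_i · f_j)], G i i = Id, and (G i j)·(G j k) = G i k for all i, j, k. Then there exists a family (A i) of invertible 2×2 matrices over K such that all entries of A i and of (A i)⁻¹ lie in ℂ[x][1/f_i], and (A i)⁻¹ · (G i j) · (A j) = Id for all i, j. -/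

import Mathlib

/-- `g ∈ ℂ[x][1/f] ⊂ ℂ(x)`: `g` can be written as `p / fⁿ` with `p` a polynomial. -/
def MemLocalization (f : Polynomial ℂ) (g : RatFunc ℂ) : Prop :=
  ∃ (p : Polynomial ℂ) (n : ℕ),
    g = algebraMap (Polynomial ℂ) (RatFunc ℂ) p / (algebraMap (Polynomial ℂ) (RatFunc ℂ) f) ^ n

/-!
The global sections of the bundle, written in a fixed chart `U_{i₀}`, form a `ℂ[x]`-submodule `M`
of `ℂ(x)ⁿ` squeezed between `a • ℂ[x]ⁿ` and `b⁻¹ • ℂ[x]ⁿ` for nonzero polynomials `a`, `b`: the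
upper bound because a rational function regular on every `U_i` is a polynomial, the `f_i` having
no common root. So `M` is free of rank `n` over the PID `ℂ[x]`. With a basis of `M` as the columns
of `A₀`, the matrix `A_i := G i i₀ * A₀` is regular on `U_i`; so is its inverse, because every
column of `G i₀ i`, multiplied by a power of `f_i`, lies in `M`. The cocycle identity
`G i j * G j i₀ = G i i₀` then says `G i j * A_j = A_i`.
-/

open Polynomial
open scoped Matrix

-- Division by zero makes `awaySubalgebra 0 = ℂ[x]`; hence the case split in `add_mem'`.
def awaySubalgebra (f : ℂ[X]) : Subalgebra ℂ[X] (RatFunc ℂ) where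
  carrier := {g | MemLocalization f g}
  mul_mem' := by
    rintro _ _ ⟨p, n, rfl⟩ ⟨q, m, rfl⟩
    exact ⟨p * q, n + m, by rw [div_mul_div_comm, map_mul, pow_add]⟩
  add_mem' := by
    rintro _ _ ⟨p, n, rfl⟩ ⟨q, m, rfl⟩
    rcases eq_or_ne f 0 with rfl | hf
    · exact ⟨(if n = 0 then p else 0) + (if m = 0 then q else 0), 0, by split_ifs <;> simp [*]⟩
    · have : algebraMap ℂ[X] (RatFunc ℂ) f ≠ 0 := by simpa
      refine ⟨p * f ^ m + q * f ^ n, n + m, ?_⟩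
      field_simp
      simp only [map_add, map_mul, map_pow]
      ring
  algebraMap_mem' p := ⟨p, 0, by simp⟩

theorem exists_pow_mul_mem_awaySubalgebra {α : Type*} [Finite α] {c h : α → ℂ[X]}
    (hc : ∀ x, c x ≠ 0) {g : α → RatFunc ℂ} (hg : ∀ x, g x ∈ awaySubalgebra (c x * h x)) :
    ∃ N : ℕ, ∀ x, algebraMap ℂ[X] (RatFunc ℂ) (c x) ^ N * g x ∈ awaySubalgebra (h x) := by
  choose p n hpn using hg
  obtain ⟨N, hN⟩ := Finite.exists_le n
  refine ⟨N, fun x => ?_⟩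
  obtain ⟨d, hd⟩ := Nat.exists_eq_add_of_le (hN x)
  refine ⟨p x * c x ^ d, n x, ?_⟩
  have : algebraMap ℂ[X] (RatFunc ℂ) (c x) ≠ 0 := by simpa using hc x
  rw [hpn, hd, pow_add, map_mul, map_mul, map_pow, mul_pow]
  field_simp

theorem isInteger_of_forall_mem_awaySubalgebra {ι : Type*} {f : ι → ℂ[X]}
    (hroot : ∀ z : ℂ, ∃ i, (f i).eval z ≠ 0) {g : RatFunc ℂ}
    (hg : ∀ i, g ∈ awaySubalgebra (f i)) : IsLocalization.IsInteger ℂ[X] g := by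
  have hdenom : ∀ z : ℂ, ¬ g.denom.IsRoot z := by
    intro z hz
    obtain ⟨i, hi⟩ := hroot z
    obtain ⟨p, n, rfl⟩ := hg i
    have hdvd := RatFunc.denom_div_dvd p (f i ^ n)
    rw [map_pow] at hdvd
    have hzi := (hz.dvd hdvd).eq_zero
    rw [eval_pow] at hzi
    exact hi (pow_eq_zero_iff'.mp hzi).1
  have hdeg : g.denom.natDegree = 0 := by
    by_contra h
    obtain ⟨z, hz⟩ :=
      IsAlgClosed.exists_root g.denom fun h' => h (natDegree_eq_of_degree_eq_some h')
    exact hdenom z hz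
  refine ⟨g.num, ?_⟩
  conv_rhs => rw [← g.num_div_denom, eq_one_of_monic_natDegree_zero g.monic_denom hdeg, map_one,
    div_one]

section Lattice

variable {R K m : Type*} [CommRing R] [IsDomain R] [Field K] [Algebra R K] [IsFractionRing R K]
  [Fintype m]

theorem Module.Basis.eq_sum_of_smul_mem {V : Type*} [AddCommGroup V] [Module R V] [Module K V]
    [IsScalarTower R K V] {M : Submodule R V} (bM : Module.Basis m R M) {a : R} (ha : a ≠ 0)
    {v : V} (hv : a • v ∈ M) :
    v = ∑ t, ((algebraMap R K a)⁻¹ * algebraMap R K (bM.repr ⟨a • v, hv⟩ t)) • (bM t : V) := by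
  have ha' : algebraMap R K a ≠ 0 :=
    IsFractionRing.to_map_ne_zero_of_mem_nonZeroDivisors (mem_nonZeroDivisors_of_ne_zero ha)
  have hsum := congrArg Subtype.val (bM.sum_repr ⟨a • v, hv⟩)
  simp only [Submodule.coe_sum, Submodule.coe_smul] at hsum
  simp_rw [mul_smul, ← Finset.smul_sum, algebraMap_smul, hsum, ← algebraMap_smul K a v,
    inv_smul_smul₀ ha']

theorem Submodule.nonempty_basis_of_single_mem_of_isInteger [IsPrincipalIdealRing R]
    [DecidableEq m] {M : Submodule R (m → K)} {a b : R}
    (ha : a ≠ 0) (hb : b ≠ 0) (hlo : ∀ k, Pi.single k (algebraMap R K a) ∈ M)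
    (hup : ∀ v ∈ M, ∀ k, IsLocalization.IsInteger R (algebraMap R K b * v k)) :
    Nonempty (Module.Basis m R M) := by
  have ha' : algebraMap R K a ≠ 0 :=
    IsFractionRing.to_map_ne_zero_of_mem_nonZeroDivisors (mem_nonZeroDivisors_of_ne_zero ha)
  have hb' : algebraMap R K b ≠ 0 :=
    IsFractionRing.to_map_ne_zero_of_mem_nonZeroDivisors (mem_nonZeroDivisors_of_ne_zero hb)
  set e : m → m → K := fun k => Pi.single k (algebraMap R K b)⁻¹
  have he : LinearIndependent R e := Pi.linearIndependent_single_of_ne_zero fun _ => inv_ne_zero hb'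
  have hle : M ≤ Submodule.span R (Set.range e) := by
    intro v hv
    choose p hp using hup v hv
    have hv : v = ∑ k, p k • e k := by
      ext j
      simp only [Algebra.smul_def, Finset.sum_apply, Pi.mul_apply, Pi.algebraMap_apply, hp,
        Pi.single_apply, mul_ite, mul_zero, Finset.sum_ite_eq, Finset.mem_univ, ↓reduceIte, e]
      field_simp
    rw [hv]
    exact Submodule.sum_mem _ fun k _ => Submodule.smul_mem _ _ (Submodule.subset_span ⟨k, rfl⟩)
  obtain ⟨n, bM⟩ := Submodule.basisOfPidOfLESpan he hle
  have hle_card : n ≤ Fintype.card m := by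
    have hK : LinearIndependent K fun t => (bM t : m → K) :=
      (LinearIndependent.iff_fractionRing R K).1 (bM.linearIndependent.map' M.subtype M.ker_subtype)
    simpa using hK.fintype_card_le_finrank
  have hcard_le : Fintype.card m ≤ n := by
    have hsingle : LinearIndependent R fun k => (⟨_, hlo k⟩ : M) :=
      LinearIndependent.of_comp M.subtype (Pi.linearIndependent_single_of_ne_zero fun _ => ha')
    simpa using bM.card_le_card_of_linearIndependent hsingle
  exact ⟨bM.reindex (Fintype.equivOfCardEq (by simp; omega))⟩

end Lattice

theorem Matrix.mul_transpose_of_mulVec_eq_single {m α : Type*} [Fintype m] [DecidableEq m]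
    [CommSemiring α] {A : Matrix m m α} {r : m → m → α} (hr : ∀ k, A *ᵥ r k = Pi.single k 1) :
    A * (Matrix.of r)ᵀ = 1 := by
  ext j k
  simpa [Matrix.mul_apply, Matrix.one_apply, Pi.single_apply, Matrix.mulVec, dotProduct]
    using congrFun (hr k) j

section Cocycle

variable {ι m : Type*} [Fintype m] (f : ι → ℂ[X])
  (G : ι → ι → Matrix m m (RatFunc ℂ))

/-- Global sections of the bundle glued by `G`, written in the chart `U_{i₀}`. -/
def globalSections (i₀ : ι) : Submodule ℂ[X] (m → RatFunc ℂ) where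
  carrier := {v | ∀ i k, (G i i₀ *ᵥ v) k ∈ awaySubalgebra (f i)}
  add_mem' ha hb i k := by rw [Matrix.mulVec_add]; exact add_mem (ha i k) (hb i k)
  zero_mem' i k := by rw [Matrix.mulVec_zero]; exact zero_mem _
  smul_mem' c v hv i k := by rw [Matrix.mulVec_smul]; exact Subalgebra.smul_mem _ (hv i k) c

variable {f G}

theorem exists_pow_fst_mul_mem [Finite ι] (hf : ∀ i, f i ≠ 0)
    (hGmem : ∀ i j k l, G i j k l ∈ awaySubalgebra (f i * f j)) :
    ∃ N : ℕ, ∀ i j k l,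
      algebraMap ℂ[X] (RatFunc ℂ) (f i) ^ N * G i j k l ∈ awaySubalgebra (f j) := by
  obtain ⟨N, hN⟩ := exists_pow_mul_mem_awaySubalgebra (α := ι × ι × m × m)
    (c := fun x => f x.1) (h := fun x => f x.2.1) (g := fun x => G x.1 x.2.1 x.2.2.1 x.2.2.2)
    (fun _ => hf _) (fun x => hGmem _ _ _ _)
  exact ⟨N, fun i j k l => hN (i, j, k, l)⟩

theorem exists_pow_snd_mul_mem [Finite ι] (hf : ∀ i, f i ≠ 0)
    (hGmem : ∀ i j k l, G i j k l ∈ awaySubalgebra (f i * f j)) :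
    ∃ N : ℕ, ∀ i j k l,
      algebraMap ℂ[X] (RatFunc ℂ) (f j) ^ N * G i j k l ∈ awaySubalgebra (f i) := by
  obtain ⟨N, hN⟩ := exists_pow_mul_mem_awaySubalgebra (α := ι × ι × m × m)
    (c := fun x => f x.2.1) (h := fun x => f x.1) (g := fun x => G x.1 x.2.1 x.2.2.1 x.2.2.2)
    (fun _ => hf _)
    (fun x => mul_comm (f x.1) (f x.2.1) ▸ hGmem _ _ _ _)
  exact ⟨N, fun i j k l => hN (i, j, k, l)⟩

theorem nonempty_basis_globalSections [Finite ι] [DecidableEq m] (hf : ∀ i, f i ≠ 0)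
    (hroot : ∀ z : ℂ, ∃ i, (f i).eval z ≠ 0)
    (hGmem : ∀ i j k l, G i j k l ∈ awaySubalgebra (f i * f j))
    (hGd : ∀ i, G i i = 1) (hGc : ∀ i j k, G i j * G j k = G i k) (i₀ : ι) :
    Nonempty (Module.Basis m ℂ[X] (globalSections f G i₀)) := by
  obtain ⟨N₁, hN₁⟩ := exists_pow_fst_mul_mem hf hGmem
  obtain ⟨N₂, hN₂⟩ := exists_pow_snd_mul_mem hf hGmem
  refine Submodule.nonempty_basis_of_single_mem_of_isInteger (a := f i₀ ^ N₂) (b := f i₀ ^ N₁)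
    (pow_ne_zero _ (hf i₀)) (pow_ne_zero _ (hf i₀)) (fun k i l => ?_) (fun v hv k => ?_)
  · simpa [mul_comm] using hN₂ i i₀ l k
  · refine isInteger_of_forall_mem_awaySubalgebra hroot fun i => ?_
    have hv' : v = G i₀ i *ᵥ (G i i₀ *ᵥ v) := by
      rw [Matrix.mulVec_mulVec, hGc, hGd, Matrix.one_mulVec]
    rw [hv', map_pow, Matrix.mulVec, dotProduct, Finset.mul_sum]
    refine sum_mem fun l _ => ?_
    rw [← mul_assoc]
    exact mul_mem (hN₁ i₀ i k l) (hv i l)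

theorem exists_mem_awaySubalgebra_mulVec_eq [Finite ι] [DecidableEq m] (hf : ∀ i, f i ≠ 0)
    (hGmem : ∀ i j k l, G i j k l ∈ awaySubalgebra (f i * f j))
    (hGc : ∀ i j k, G i j * G j k = G i k) {i₀ : ι}
    (b : Module.Basis m ℂ[X] (globalSections f G i₀)) (i : ι) (k : m) :
    ∃ r : m → RatFunc ℂ, (∀ t, r t ∈ awaySubalgebra (f i)) ∧
      (Matrix.of fun t => (b t : m → RatFunc ℂ))ᵀ *ᵥ r = G i₀ i *ᵥ Pi.single k 1 := by
  obtain ⟨N, hN⟩ := exists_pow_snd_mul_mem hf hGmem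
  have hv : f i ^ N • (G i₀ i *ᵥ Pi.single k 1) ∈ globalSections f G i₀ := by
    intro j l
    rw [Matrix.mulVec_smul, Matrix.mulVec_mulVec, hGc, Matrix.mulVec_single_one, Pi.smul_apply,
      Algebra.smul_def, map_pow]
    exact hN j i l k
  have hsum := b.eq_sum_of_smul_mem (K := RatFunc ℂ) (pow_ne_zero _ (hf i)) hv
  refine ⟨fun t => (algebraMap ℂ[X] (RatFunc ℂ) (f i ^ N))⁻¹ *
    algebraMap ℂ[X] (RatFunc ℂ) (b.repr ⟨_, hv⟩ t),
    fun t => ⟨b.repr ⟨_, hv⟩ t, N, by rw [map_pow, div_eq_inv_mul]⟩, ?_⟩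
  rw [Matrix.mulVec_transpose, Matrix.vecMul_eq_sum]
  exact hsum.symm

end Cocycle

theorem stmt8_general {ι : Type*} [Finite ι] (f : ι → Polynomial ℂ) (hf : ∀ i, f i ≠ 0)
    (hroot : ∀ z : ℂ, ∃ i, (f i).eval z ≠ 0)
    (G : ι → ι → Matrix (Fin 2) (Fin 2) (RatFunc ℂ))
    (hGmem : ∀ i j k l, MemLocalization (f i * f j) (G i j k l))
    (hGd : ∀ i, G i i = 1)
    (hGc : ∀ i j k, G i j * G j k = G i k) :
    ∃ A : ι → Matrix (Fin 2) (Fin 2) (RatFunc ℂ),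
      (∀ i, IsUnit (A i)) ∧
      (∀ i k l, MemLocalization (f i) (A i k l)) ∧
      (∀ i k l, MemLocalization (f i) ((A i)⁻¹ k l)) ∧
      (∀ i j, (A i)⁻¹ * G i j * A j = 1) := by
  obtain ⟨i₀, -⟩ := hroot 0
  obtain ⟨b⟩ := nonempty_basis_globalSections hf hroot hGmem hGd hGc i₀
  set A₀ := (Matrix.of fun t => (b t : Fin 2 → RatFunc ℂ))ᵀ
  choose r hr_mem hr using exists_mem_awaySubalgebra_mulVec_eq hf hGmem hGc b
  have hAC : ∀ i, G i i₀ * A₀ * (Matrix.of (r i))ᵀ = 1 := fun i =>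
    Matrix.mul_transpose_of_mulVec_eq_single fun k => by
      rw [← Matrix.mulVec_mulVec, hr, Matrix.mulVec_mulVec, hGc, hGd, Matrix.one_mulVec]
  have hAu : ∀ i, IsUnit (G i i₀ * A₀) := fun i =>
    (Matrix.isUnit_iff_isUnit_det _).2 (Matrix.isUnit_det_of_right_inverse (hAC i))
  refine ⟨fun i => G i i₀ * A₀, hAu, fun i k l => (b l).2 i k, fun i k l => ?_, fun i j => ?_⟩
  · rw [Matrix.inv_eq_right_inv (hAC i)]
    exact hr_mem i l k
  · rw [Matrix.mul_assoc, ← Matrix.mul_assoc (G i j), hGc]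
    exact Matrix.nonsing_inv_mul _ ((Matrix.isUnit_iff_isUnit_det _).1 (hAu i))

/-- triviality of rank-2 bundles on `𝔸¹`, Čech-cocycle form.  Let `(f i)`
be finitely many nonzero polynomials with no common root, and let `G i j` be an invertible
cocycle of `2×2` matrices over `ℂ(x)` whose entries (and those of the inverses) are regular
on `U_i ∩ U_j`, i.e. lie in `ℂ[x][1/(f_i·f_j)]`.  Then there are invertible matrices `A i`
regular on `U_i` with regular inverses such that `(A i)⁻¹ * G i j * A j = 1`. -/
theorem stmt8 {ι : Type*} [Finite ι] (f : ι → Polynomial ℂ) (hf : ∀ i, f i ≠ 0)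
    (hroot : ∀ z : ℂ, ∃ i, (f i).eval z ≠ 0)
    (G : ι → ι → Matrix (Fin 2) (Fin 2) (RatFunc ℂ))
    (hGu : ∀ i j, IsUnit (G i j))
    (hGmem : ∀ i j k l, MemLocalization (f i * f j) (G i j k l))
    (hGinv : ∀ i j k l, MemLocalization (f i * f j) ((G i j)⁻¹ k l))
    (hGd : ∀ i, G i i = 1)
    (hGc : ∀ i j k, G i j * G j k = G i k) :
    ∃ A : ι → Matrix (Fin 2) (Fin 2) (RatFunc ℂ),
      (∀ i, IsUnit (A i)) ∧
      (∀ i k l, MemLocalization (f i) (A i k l)) ∧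
      (∀ i k l, MemLocalization (f i) ((A i)⁻¹ k l)) ∧
      (∀ i j, (A i)⁻¹ * G i j * A j = 1) :=
  stmt8_general f hf hroot G hGmem hGd hGc
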